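/- Let k, n be positive integers, let p_n(x) = x(x+1)⋯(x+n−1) be the rising factorial, let z_i = 1 + k·i, and define t_0(x) = 1 and t_n(x) = p_n(x) − Σ_{i=0}^{n−1} C(n,i) p_{n−i}(−z_i) t_i(x). Then (1/n!) · t_n(0) equals the n-th k-Fuss–Catalan number, i.e., t_n(0) / n! = (1/(1+k·n)) · C((k+1)·n, n). -/
import Mathlib


open Finset

/-- The generalized Gončarov polynomials associated with the sequence `p` and the grid `Z`,
via the recurrence `t_n(x; Z) = p_n(x) - ∑_{i<n} C(n,i) p_{n-i}(z_i) t_i(x; Z)`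
(with `t_0 = p_0 = 1`). -/
noncomputable def gonc {S : Type*} [CommRing S] (p : ℕ → S → S) (Z : ℕ → S) (n : ℕ) (x : S) : S :=
  p n x - ∑ i ∈ (Finset.range n).attach,
    (n.choose i.1 : S) * p (n - i.1) (Z i.1) * gonc p Z i.1 x
termination_by n
decreasing_by exact Finset.mem_range.mp i.2

/-- The rising factorial `x^{(m)} = x (x+1) ⋯ (x+m-1)`, with `x^{(0)} = 1`. -/
noncomputable def risingFac (m : ℕ) (x : ℚ) : ℚ := ∏ j ∈ Finset.range m, (x + j)

open scoped fwdDiff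

/-- Iterated forward differences kill polynomials of low degree. -/
lemma fd_poly : ∀ (n : ℕ) (P : Polynomial ℚ), P.degree < n →
    (fwdDiff (1:ℚ))^[n] (fun x ↦ P.eval x) = fun _ ↦ 0 := by
  intro n
  induction n with
  | zero =>
    intro P hP
    have hP0 : P = 0 := by
      rw [← Polynomial.degree_eq_bot]
      exact Nat.WithBot.lt_zero_iff.mp (by simpa using hP)
    subst hP0
    simp
  | succ n IH =>
    intro P hP
    have key : fwdDiff (1:ℚ) (fun x ↦ P.eval x)
        = fun x ↦ (P.comp (Polynomial.X + 1) - P).eval x := by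
      funext x
      simp [fwdDiff, Polynomial.eval_comp]
    have hQ : (P.comp (Polynomial.X + 1) - P).degree < n := by
      rcases eq_or_ne P.natDegree 0 with h0 | h0
      · obtain ⟨c, rfl⟩ := Polynomial.natDegree_eq_zero.mp h0
        simp only [Polynomial.C_comp, sub_self, Polynomial.degree_zero]
        exact WithBot.bot_lt_coe n
      · have hP0 : P ≠ 0 := fun h => h0 (by simp [h])
        have hXd : (Polynomial.X + 1 : Polynomial ℚ).natDegree = 1 := by
          simpa using Polynomial.natDegree_X_add_C (1 : ℚ)
        have h1 : (P.comp (Polynomial.X + 1)).natDegree = P.natDegree := by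
          rw [Polynomial.natDegree_comp, hXd, mul_one]
        have hc0 : P.comp (Polynomial.X + 1) ≠ 0 := by
          intro h
          have := congrArg Polynomial.natDegree h
          rw [h1, Polynomial.natDegree_zero] at this
          exact h0 this
        have hd : (P.comp (Polynomial.X + 1)).degree = P.degree := by
          rw [Polynomial.degree_eq_natDegree hc0, Polynomial.degree_eq_natDegree hP0, h1]
        have hlc : (P.comp (Polynomial.X + 1)).leadingCoeff = P.leadingCoeff := by
          rw [Polynomial.leadingCoeff_comp (by rw [hXd]; exact one_ne_zero)]
          have hl1 : (Polynomial.X + 1 : Polynomial ℚ).leadingCoeff = 1 := by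
            rw [← Polynomial.C_1]; exact Polynomial.leadingCoeff_X_add_C 1
          rw [hl1, one_pow, mul_one]
        have hlt := Polynomial.degree_sub_lt hd hc0 hlc
        rw [hd] at hlt
        have hle : P.degree ≤ (n : ℕ) := by
          rw [Polynomial.degree_eq_natDegree hP0] at hP ⊢
          have : P.natDegree < n + 1 := by exact_mod_cast hP
          exact_mod_cast Nat.lt_succ_iff.mp this
        exact lt_of_lt_of_le hlt hle
    rw [Function.iterate_succ_apply, key, IH _ hQ]

/-- The `n`-th alternating binomial sum of a polynomial of degree `< n` vanishes. -/
lemma sum_eval_eq_zero (n : ℕ) (P : Polynomial ℚ) (hP : P.degree < n) :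
    ∑ i ∈ range (n + 1), (-1 : ℚ) ^ (n - i) * (n.choose i) * P.eval (i:ℚ) = 0 := by
  have h := fwdDiff_iter_eq_sum_shift (1 : ℚ) (fun x ↦ P.eval x) n 0
  rw [fd_poly n P hP] at h
  have h' : (0 : ℚ) = ∑ i ∈ range (n + 1), (-1 : ℚ) ^ (n - i) * (n.choose i) * P.eval (i:ℚ) := by
    simp only at h
    rw [h]
    refine Finset.sum_congr rfl fun i _ => ?_
    have : (0 : ℚ) + i • (1 : ℚ) = (i : ℚ) := by simp
    rw [zsmul_eq_mul, this]
    push_cast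
    ring
  exact h'.symm

lemma desc_cast (k m : ℕ) :
    (m.factorial : ℚ) * (((k + 1) * m).choose m : ℚ)
      = ∏ j ∈ range m, (((k : ℚ) + 1) * m - j) := by
  have h := Nat.descFactorial_eq_factorial_mul_choose ((k + 1) * m) m
  have h2 := Nat.descFactorial_eq_prod_range ((k + 1) * m) m
  have : ((m.factorial * ((k + 1) * m).choose m : ℕ) : ℚ)
      = ((∏ j ∈ range m, ((k + 1) * m - j) : ℕ) : ℚ) := by rw [← h, h2]
  rw [Nat.cast_mul, Nat.cast_prod] at this
  rw [this]
  refine Finset.prod_congr rfl fun j hj => ?_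
  have hj' : j ≤ (k + 1) * m := le_trans (Nat.le_of_lt_succ (Nat.lt_succ_of_lt
    (mem_range.mp hj))) (Nat.le_mul_of_pos_left m k.succ_pos)
  rw [Nat.cast_sub hj']
  push_cast
  ring

lemma rising_neg (k i m : ℕ) (hm : 0 < m) :
    risingFac m (-(1 + (k : ℚ) * i))
      = (-1) ^ m * (1 + (k : ℚ) * i) * ∏ j ∈ range (m - 1), ((k : ℚ) * i - j) := by
  unfold risingFac
  have h1 : ∀ j : ℕ, (-(1 + (k : ℚ) * i) + j) = -((1 + (k : ℚ) * i) - j) := by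
    intro j; ring
  calc ∏ j ∈ range m, (-(1 + (k : ℚ) * i) + j)
      = ∏ j ∈ range m, (-1) * ((1 + (k : ℚ) * i) - j) := by
        refine Finset.prod_congr rfl fun j _ => ?_; rw [h1]; ring
    _ = (-1) ^ m * ∏ j ∈ range m, ((1 + (k : ℚ) * i) - j) := by
        rw [Finset.prod_mul_distrib, Finset.prod_const, Finset.card_range]
    _ = (-1) ^ m * (1 + (k : ℚ) * i) * ∏ j ∈ range (m - 1), ((k : ℚ) * i - j) := by
        obtain ⟨m', rfl⟩ := Nat.exists_eq_succ_of_ne_zero hm.ne'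
        rw [Finset.prod_range_succ']
        simp only [Nat.succ_sub_one]
        rw [mul_comm (∏ _j ∈ _, _)]
        rw [← mul_assoc]
        congr 1
        · push_cast; ring
        · refine Finset.prod_congr rfl fun j _ => ?_; push_cast; ring

lemma gonc_key (k : ℕ) : ∀ n : ℕ,
    gonc risingFac (fun i => -((1 : ℚ) + (k : ℚ) * (i : ℚ))) n 0
      = (n.factorial : ℚ) * (((k + 1) * n).choose n : ℚ) / (1 + (k : ℚ) * n) := by
  intro n
  induction n using Nat.strong_induction_on with
  | _ n IH =>
  rcases Nat.eq_zero_or_pos n with rfl | hn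
  · rw [gonc]
    simp [risingFac]
  · -- notation
    set g : ℕ → ℚ := fun i => ∏ j ∈ range (n - 1), (((k : ℚ) + 1) * i - j) with hg
    -- merge lemma
    have hmerge : ∀ i : ℕ, i < n →
        (∏ j ∈ range i, (((k : ℚ) + 1) * i - j)) * ∏ j ∈ range (n - i - 1), ((k : ℚ) * i - j)
          = g i := by
      intro i hi
      have h1 : (∏ j ∈ range (n - i - 1), ((k : ℚ) * i - j))
          = ∏ j ∈ range (n - 1 - i), (((k : ℚ) + 1) * (i : ℚ) - (↑(i + j) : ℚ)) := by
        rw [show n - i - 1 = n - 1 - i from by omega]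
        refine Finset.prod_congr rfl fun j _ => ?_
        push_cast
        ring
      rw [h1, ← Finset.prod_range_add (fun j => (((k : ℚ) + 1) * (i : ℚ) - j)) i (n - 1 - i),
        show i + (n - 1 - i) = n - 1 from by omega]
    -- the polynomial
    set P : Polynomial ℚ :=
      ∏ j ∈ range (n - 1), (Polynomial.C ((k : ℚ) + 1) * Polynomial.X + Polynomial.C (-(j : ℚ)))
      with hP
    have hPdeg : P.degree < (n : ℕ) := by
      rw [hP, Polynomial.degree_prod]
      have : ∀ j ∈ range (n - 1),
          (Polynomial.C ((k : ℚ) + 1) * Polynomial.X + Polynomial.C (-(j : ℚ))).degree = 1 := by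
        intro j _
        exact Polynomial.degree_linear (by positivity)
      rw [Finset.sum_congr rfl this, Finset.sum_const, Finset.card_range, nsmul_eq_mul, mul_one]
      exact_mod_cast Nat.sub_lt hn one_pos
    have hPeval : ∀ i : ℕ, P.eval (i : ℚ) = g i := by
      intro i
      rw [hP, Polynomial.eval_prod, hg]
      refine Finset.prod_congr rfl fun j _ => ?_
      simp
      ring
    -- the vanishing alternating sum
    have hz := sum_eval_eq_zero n P hPdeg
    rw [Finset.sum_range_succ] at hz
    simp only [hPeval] at hz
    have hgn : g n = -∑ i ∈ range n, (-1 : ℚ) ^ (n - i) * (n.choose i) * g i := by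
      have h := hz
      simp only [Nat.sub_self, pow_zero, Nat.choose_self, Nat.cast_one, one_mul] at h
      linarith
    -- value of the head term
    have h1kn : (0 : ℚ) < 1 + (k : ℚ) * n := by positivity
    have hgoal : (n.factorial : ℚ) * (((k + 1) * n).choose n : ℚ) / (1 + (k : ℚ) * n) = g n := by
      have hB := desc_cast k n
      have hn1 : n = (n - 1) + 1 := by omega
      have hsplit : (∏ j ∈ range n, (((k : ℚ) + 1) * n - j))
          = g n * (1 + (k : ℚ) * n) := by
        calc (∏ j ∈ range n, (((k : ℚ) + 1) * n - j))
            = ∏ j ∈ range ((n - 1) + 1), (((k : ℚ) + 1) * n - j) := by rw [← hn1]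
          _ = (∏ j ∈ range (n - 1), (((k : ℚ) + 1) * n - j))
              * (((k : ℚ) + 1) * n - (↑(n - 1) : ℚ)) :=
            Finset.prod_range_succ _ _
          _ = g n * (1 + (k : ℚ) * n) := by
            congr 1
            rw [Nat.cast_sub hn]
            push_cast
            ring
      rw [hB, hsplit, mul_div_assoc, div_self h1kn.ne', mul_one]
    -- unfold the recurrence
    rw [gonc]
    rw [Finset.sum_attach (range n) (fun i => (n.choose i : ℚ)
        * risingFac (n - i) (-((1 : ℚ) + (k : ℚ) * i))
        * gonc risingFac (fun i => -((1 : ℚ) + (k : ℚ) * (i : ℚ))) i 0)]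
    have hrf0 : risingFac n 0 = 0 := by
      refine Finset.prod_eq_zero (Finset.mem_range.mpr hn) ?_
      simp
    have hsum : (∑ i ∈ range n, (n.choose i : ℚ)
          * risingFac (n - i) (-((1 : ℚ) + (k : ℚ) * i))
          * gonc risingFac (fun i => -((1 : ℚ) + (k : ℚ) * (i : ℚ))) i 0)
        = ∑ i ∈ range n, (-1 : ℚ) ^ (n - i) * (n.choose i) * g i := by
      refine Finset.sum_congr rfl fun i hi => ?_
      have hi' : i < n := Finset.mem_range.mp hi
      rw [IH i hi', rising_neg k i (n - i) (by omega), desc_cast k i, ← hmerge i hi']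
      have h1ki : (0 : ℚ) < 1 + (k : ℚ) * i := by positivity
      field_simp
    rw [hrf0, hsum, hgoal, hgn, zero_sub]

/-- For the rising factorials `p_n(x) = x^{(n)}` and the grid `z_i = 1 + k i`,
`t_n(0) / n!` is the `n`-th `k`-Fuss–Catalan number `(1/(1+kn)) C((k+1)n, n)`. -/
theorem goncarov_fuss_catalan (k n : ℕ) (hk : 0 < k) (hn : 0 < n) :
    gonc risingFac (fun i => -((1 : ℚ) + (k : ℚ) * (i : ℚ))) n 0 / (n.factorial : ℚ)
      = (1 / (1 + (k : ℚ) * (n : ℚ))) * (((k + 1) * n).choose n : ℚ) := by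
  rw [gonc_key k n]
  have h1 : (0 : ℚ) < 1 + (k : ℚ) * n := by positivity
  have h2 : (0 : ℚ) < (n.factorial : ℚ) := by exact_mod_cast n.factorial_pos
  field_simp
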